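/- arXiv:2010.05030 — 9 statements merged into one kernel-verified Lean document; each statement's English description precedes it below -/
import Mathlib

section
/- Let q ≥ 2 be an integer and let ν, m, t be positive integers with m ≥ t+2 and 2ν ≥ 3m - t + 3. Define N(ν,m,s) = ∏_{i=1}^{m-s} (q^(2(ν-m+i)) - 1)/(q^i - 1). Then ([m-t+1 choose 1]_q - 1)·N(ν,m,t+1) + (q+1) < [m-t+1 choose 1]_q·N(ν,m,t+1) - q·[m-t+1 choose 2]_q·N(ν,m,t+2). -/
/-- The Gaussian binomial coefficient `[a choose b]_q` as a rational number. -/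
noncomputable def gaussBinom (q : ℚ) (a b : ℕ) : ℚ :=
  ∏ j ∈ Finset.range b, (q ^ (a - j) - 1) / (q ^ (b - j) - 1)

/-- `N(ν,m,s)`: the number of totally isotropic `m`-subspaces of a `2ν`-dimensional
symplectic space containing a fixed totally isotropic `s`-subspace. -/
noncomputable def NIso (q : ℚ) (ν m s : ℕ) : ℚ :=
  ∏ i ∈ Finset.Icc 1 (m - s), (q ^ (2 * (ν - m + i)) - 1) / (q ^ i - 1)


set_option maxHeartbeats 1000000 in
lemma core (Q a X : ℚ) (hQ : 2 ≤ Q) (ha : Q ≤ a) (hX : a^3 * Q^4 ≤ X) :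
    Q * ((a*Q^2-1)/(Q^2-1) * ((a*Q-1)/(Q-1))) + (Q+1) < (X-1)/(a-1) := by
  have h1 : (0:ℚ) < Q - 1 := by linarith
  have h2 : (0:ℚ) < Q^2 - 1 := by nlinarith
  have h3 : (0:ℚ) < a - 1 := by linarith
  have hu : (0:ℚ) ≤ Q - 2 := by linarith
  have hs : (0:ℚ) ≤ a - Q := by linarith
  have hterm : ∀ j k : ℕ, (0:ℚ) ≤ (Q-2)^j*(a-Q)^k :=
    fun j k => mul_nonneg (pow_nonneg hu j) (pow_nonneg hs k)
  have heq : Q * ((a*Q^2-1)/(Q^2-1) * ((a*Q-1)/(Q-1))) + (Q+1)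
      = (Q*(a*Q^2-1)*(a*Q-1) + (Q+1)*((Q^2-1)*(Q-1))) / ((Q^2-1)*(Q-1)) := by
    field_simp
  have hred : (a^3*Q^4-1)*((Q^2-1)*(Q-1)) ≤ (X-1)*((Q^2-1)*(Q-1)) := by
    apply mul_le_mul_of_nonneg_right (by linarith) (by positivity)
  have hid : (a^3*Q^4-1)*((Q^2-1)*(Q-1)) - (Q*(a*Q^2-1)*(a*Q-1) + (Q+1)*((Q^2-1)*(Q-1)))*(a-1)
      = 330 + 473*(a-Q)^1 + 220*(a-Q)^2 + 32*(a-Q)^3 + 2009*(Q-2)^1 + 2703*(Q-2)^1*(a-Q)^1 + 1200*(Q-2)^1*(a-Q)^2 + 176*(Q-2)^1*(a-Q)^3 + 5382*(Q-2)^2 + 6623*(Q-2)^2*(a-Q)^1 + 2671*(Q-2)^2*(a-Q)^2 + 352*(Q-2)^2*(a-Q)^3 + 8360*(Q-2)^3 + 9161*(Q-2)^3*(a-Q)^1 + 3225*(Q-2)^3*(a-Q)^2 + 360*(Q-2)^3*(a-Q)^3 + 8349*(Q-2)^4 + 7917*(Q-2)^4*(a-Q)^1 + 2341*(Q-2)^4*(a-Q)^2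 + 210*(Q-2)^4*(a-Q)^3 + 5612*(Q-2)^5 + 4454*(Q-2)^5*(a-Q)^1 + 1056*(Q-2)^5*(a-Q)^2 + 71*(Q-2)^5*(a-Q)^3 + 2577*(Q-2)^6 + 1638*(Q-2)^6*(a-Q)^1 + 291*(Q-2)^6*(a-Q)^2 + 13*(Q-2)^6*(a-Q)^3 + 800*(Q-2)^7 + 381*(Q-2)^7*(a-Q)^1 + 45*(Q-2)^7*(a-Q)^2 + 1*(Q-2)^7*(a-Q)^3 + 161*(Q-2)^8 + 51*(Q-2)^8*(a-Q)^1 + 3*(Q-2)^8*(a-Q)^2 + 19*(Q-2)^9 + 3*(Q-2)^9*(a-Q)^1 + 1*(Q-2)^10 := by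
    ring
  have hpoly : (Q*(a*Q^2-1)*(a*Q-1) + (Q+1)*((Q^2-1)*(Q-1)))*(a-1) < (a^3*Q^4-1)*((Q^2-1)*(Q-1)) := by
    have h01 := hterm 0 1
    linarith [hid, hterm 0 1, hterm 0 2, hterm 0 3, hterm 1 0, hterm 1 1, hterm 1 2, hterm 1 3, hterm 2 0, hterm 2 1, hterm 2 2, hterm 2 3, hterm 3 0, hterm 3 1, hterm 3 2, hterm 3 3, hterm 4 0, hterm 4 1, hterm 4 2, hterm 4 3, hterm 5 0, hterm 5 1, hterm 5 2, hterm 5 3, hterm 6 0, hterm 6 1, hterm 6 2, hterm 6 3, hterm 7 0, hterm 7 1, hterm 7 2, hterm 7 3, hterm 8 0, hterm 8 1, hterm 8 2, hterm 9 0, hterm 9 1, hterm 10 0]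
  rw [heq, div_lt_div_iff₀ (by positivity) h3]
  linarith


private lemma prod_ge_one' (Q : ℚ) (hQ : 2 ≤ Q) (e n : ℕ) :
    1 ≤ ∏ i ∈ Finset.Icc 1 n, (Q ^ (2 * (e + i)) - 1) / (Q ^ i - 1) := by
  have hQ1 : (1:ℚ) < Q := by linarith
  calc (1:ℚ) = ∏ i ∈ Finset.Icc 1 n, 1 := by simp
  _ ≤ _ := by
    apply Finset.prod_le_prod (by intros; norm_num)
    intro i hi
    have hi1 : 1 ≤ i := (Finset.mem_Icc.mp hi).1
    have hd : (0:ℚ) < Q ^ i - 1 := by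
      have : (1:ℚ) < Q ^ i := one_lt_pow₀ hQ1 (by omega)
      linarith
    rw [le_div_iff₀ hd]
    have : Q ^ i ≤ Q ^ (2*(e+i)) := pow_le_pow_right₀ hQ1.le (by omega)
    linarith

theorem stmt_3 (q ν m t : ℕ) (hq : 2 ≤ q) (hν : 0 < ν) (hm : 0 < m) (ht : 0 < t)
    (hmt : t + 2 ≤ m) (hνm : 3 * m + 3 ≤ 2 * ν + t) :
    (gaussBinom (q : ℚ) (m - t + 1) 1 - 1) * NIso (q : ℚ) ν m (t + 1) + ((q : ℚ) + 1) <
      gaussBinom (q : ℚ) (m - t + 1) 1 * NIso (q : ℚ) ν m (t + 1) -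
        (q : ℚ) * gaussBinom (q : ℚ) (m - t + 1) 2 * NIso (q : ℚ) ν m (t + 2) := by
  set Q : ℚ := (q : ℚ) with hQdef
  have hQ : (2:ℚ) ≤ Q := by rw [hQdef]; exact_mod_cast hq
  have hQ1 : (1:ℚ) < Q := by linarith
  set k := m - t with hkdef
  have hk2 : 2 ≤ k := by omega
  have h1 : m - (t+1) = k - 2 + 1 := by omega
  have h2 : m - (t+2) = k - 2 := by omega
  have he : k + 3 ≤ 2 * (ν - m) := by omega
  -- N2 ≥ 1 and N2 > 0
  have hN2 : 1 ≤ NIso Q ν m (t+2) := by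
    rw [NIso, h2]; exact prod_ge_one' Q hQ (ν - m) (k-2)
  have hN2pos : 0 < NIso Q ν m (t+2) := by linarith
  -- split N1
  have hsplit : NIso Q ν m (t+1) = NIso Q ν m (t+2) *
      ((Q ^ (2 * (ν - m + (k - 2 + 1))) - 1) / (Q ^ (k - 2 + 1) - 1)) := by
    rw [NIso, NIso, h1, h2, Finset.prod_Icc_succ_top (by omega : 1 ≤ k - 2 + 1)]
  -- gaussBinom values
  have hG2 : gaussBinom Q (m - t + 1) 2
      = (Q^(k+1)-1)/(Q^2-1) * ((Q^k-1)/(Q-1)) := by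
    rw [gaussBinom]
    rw [Finset.prod_range_succ, Finset.prod_range_succ, Finset.prod_range_zero, one_mul]
    have e1 : m - t + 1 - 0 = k + 1 := by omega
    have e2 : m - t + 1 - 1 = k := by omega
    rw [e1, e2]
    norm_num
  -- core inequality
  set a : ℚ := Q ^ (k - 1) with hadef
  have hkk : k - 2 + 1 = k - 1 := by omega
  have ha : Q ≤ a := by
    calc Q = Q ^ 1 := (pow_one Q).symm
    _ ≤ Q ^ (k-1) := pow_le_pow_right₀ hQ1.le (by omega)
  have hX : a^3 * Q^4 ≤ Q ^ (2 * (ν - m + (k - 2 + 1))) := by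
    have : a^3 * Q^4 = Q ^ ((k-1)*3 + 4) := by rw [hadef, ← pow_mul, ← pow_add]
    rw [this]
    exact pow_le_pow_right₀ hQ1.le (by omega)
  have hQk1 : Q^(k+1) = a * Q^2 := by rw [hadef, ← pow_add]; congr 1; omega
  have hQk : Q^k = a * Q := by rw [hadef, ← pow_succ]; congr 1; omega
  have hcore : Q * gaussBinom Q (m - t + 1) 2 + (Q + 1)
      < (Q ^ (2 * (ν - m + (k - 2 + 1))) - 1) / (Q ^ (k - 2 + 1) - 1) := by
    rw [hG2, hQk1, hQk, show Q ^ (k - 2 + 1) = a by rw [hkk]]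
    exact core Q a _ hQ ha hX
  -- combine
  set G2 := gaussBinom Q (m - t + 1) 2 with hG2def
  set N2 := NIso Q ν m (t+2) with hN2def
  set F := (Q ^ (2 * (ν - m + (k - 2 + 1))) - 1) / (Q ^ (k - 2 + 1) - 1) with hFdef
  have hG2nn : 0 ≤ Q * G2 := by
    rw [hG2]
    have hp1 : (0:ℚ) < Q^(k+1) - 1 := by
      have := one_lt_pow₀ hQ1 (by omega : k + 1 ≠ 0); linarith
    have hp2 : (0:ℚ) < Q^k - 1 := by
      have := one_lt_pow₀ hQ1 (by omega : k ≠ 0); linarith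
    have hq1 : (0:ℚ) < Q - 1 := by linarith
    have hq2 : (0:ℚ) < Q^2 - 1 := by nlinarith
    exact mul_nonneg (by linarith) (mul_nonneg (div_nonneg hp1.le hq2.le) (div_nonneg hp2.le hq1.le))
  have step1 : Q * G2 * N2 + (Q + 1) ≤ (Q * G2 + (Q + 1)) * N2 := by nlinarith
  have step2 : (Q * G2 + (Q + 1)) * N2 < F * N2 :=
    mul_lt_mul_of_pos_right hcore hN2pos
  have hN1 : NIso Q ν m (t+1) = N2 * F := hsplit
  nlinarith [step1, step2, hN1]
end

section
/- Let q ≥ 2 be an integer and ν, m, t positive integers with m ≥ t+2, 1 ≤ t ≤ m/2 - 1, and 2ν ≥ 3m+1. With N(ν,m,s) = ∏_{i=1}^{m-s} (q^(2(ν-m+i)) - 1)/(q^i - 1), one has ([m-t+1 choose 1]_q - [t+2 choose 1]_q)·(q^(2(ν-t-1)) - 1)/(q^(m-t-1) - 1) > q·([m-t+1 choose 2]_q - [t+1 choose 1]_q). -/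
lemma gb1 (Q : ℚ) (a : ℕ) : gaussBinom Q a 1 = (Q ^ a - 1) / (Q - 1) := by
  simp [gaussBinom]

lemma gb2 (Q : ℚ) (a : ℕ) :
    gaussBinom Q a 2 = (Q ^ a - 1) / (Q ^ 2 - 1) * ((Q ^ (a - 1) - 1) / (Q - 1)) := by
  rw [gaussBinom, Finset.prod_range_succ, Finset.prod_range_one]
  norm_num

set_option maxHeartbeats 1600000 in
theorem stmt_4 (q ν m t : ℕ) (hq : 2 ≤ q) (hν : 0 < ν) (hm : 0 < m) (ht : 1 ≤ t)
    (hmt : t + 2 ≤ m) (htm : 2 * t + 2 ≤ m) (hνm : 3 * m + 1 ≤ 2 * ν) :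
    (gaussBinom (q : ℚ) (m - t + 1) 1 - gaussBinom (q : ℚ) (t + 2) 1) *
        (((q : ℚ) ^ (2 * (ν - t - 1)) - 1) / ((q : ℚ) ^ (m - t - 1) - 1)) >
      (q : ℚ) * (gaussBinom (q : ℚ) (m - t + 1) 2 - gaussBinom (q : ℚ) (t + 1) 1) := by
  obtain ⟨s, rfl⟩ : ∃ s, m = 2 * t + 2 + s := ⟨m - (2 * t + 2), by omega⟩
  obtain ⟨w, hw⟩ : ∃ w, 2 * (ν - t - 1) = (t + 1 + s) + (3 * t + 4 + 2 * s + w) :=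
    ⟨2 * (ν - t - 1) - (4 * t + 5 + 3 * s), by omega⟩
  have e1 : 2 * t + 2 + s - t + 1 = t + 3 + s := by omega
  have e2 : 2 * t + 2 + s - t - 1 = t + 1 + s := by omega
  rw [e1, e2, hw, gb1, gb1, gb1, gb2]
  have e3 : t + 3 + s - 1 = t + 2 + s := by omega
  rw [e3]
  set Q : ℚ := (q : ℚ) with hQdef
  have hQ2 : (2 : ℚ) ≤ Q := by rw [hQdef]; exact_mod_cast hq
  have hQ1 : (1 : ℚ) < Q := by linarith
  have hQ0 : (0 : ℚ) < Q := by linarith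
  have hpow : ∀ n : ℕ, (1 : ℚ) ≤ Q ^ n := fun n => one_le_pow₀ (le_of_lt hQ1)
  have hpos : ∀ n : ℕ, (0 : ℚ) < Q ^ n := fun n => pow_pos hQ0 n
  have d1 : (0 : ℚ) < Q - 1 := by linarith
  have d2 : (0 : ℚ) < Q ^ 2 - 1 := by nlinarith
  have d3 : (0 : ℚ) < Q ^ (t + 1 + s) - 1 := by
    have := one_lt_pow₀ hQ1 (n := t + 1 + s) (by omega); linarith
  -- Lower bound for the LHS
  have hF1 : Q ^ (t + 2) ≤ (Q ^ (t + 3 + s) - 1) / (Q - 1) - (Q ^ (t + 2) - 1) / (Q - 1) := by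
    rw [div_sub_div_same, le_div_iff₀ d1]
    have h1 : Q ^ (t + 3 + s) = Q ^ (t + 2) * Q ^ (s + 1) := by
      rw [← pow_add]; congr 1; omega
    have h2 : Q ≤ Q ^ (s + 1) := by
      calc Q = Q ^ 1 := (pow_one Q).symm
        _ ≤ Q ^ (s + 1) := pow_le_pow_right₀ (le_of_lt hQ1) (by omega)
    nlinarith [mul_le_mul_of_nonneg_left h2 (le_of_lt (hpos (t + 2)))]
  have hF2 : Q ^ (3 * t + 4 + 2 * s + w) ≤
      (Q ^ ((t + 1 + s) + (3 * t + 4 + 2 * s + w)) - 1) / (Q ^ (t + 1 + s) - 1) := by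
    rw [le_div_iff₀ d3]
    have h1 : Q ^ ((t + 1 + s) + (3 * t + 4 + 2 * s + w)) =
        Q ^ (3 * t + 4 + 2 * s + w) * Q ^ (t + 1 + s) := by rw [← pow_add]; congr 1; omega
    nlinarith [hpow (3 * t + 4 + 2 * s + w)]
  have hLHS : Q ^ (4 * t + 6 + 2 * s) ≤
      ((Q ^ (t + 3 + s) - 1) / (Q - 1) - (Q ^ (t + 2) - 1) / (Q - 1)) *
        ((Q ^ ((t + 1 + s) + (3 * t + 4 + 2 * s + w)) - 1) / (Q ^ (t + 1 + s) - 1)) := by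
    calc Q ^ (4 * t + 6 + 2 * s) ≤ Q ^ (t + 2) * Q ^ (3 * t + 4 + 2 * s + w) := by
          rw [← pow_add]
          exact pow_le_pow_right₀ (le_of_lt hQ1) (by omega)
      _ ≤ _ := by
          apply mul_le_mul hF1 hF2 (le_of_lt (hpos _))
          linarith [hpos (t + 2), hF1]
  -- Upper bound for the RHS
  have hG1 : (Q ^ (t + 3 + s) - 1) / (Q ^ 2 - 1) < Q ^ (t + 2 + s) := by
    rw [div_lt_iff₀ d2]
    have h1 : Q ^ (t + 3 + s) = Q ^ (t + 2 + s) * Q := by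
      rw [← pow_succ]; congr 1; omega
    have hQQ : (1 : ℚ) ≤ Q ^ 2 - Q - 1 := by nlinarith
    nlinarith [mul_le_mul_of_nonneg_left hQQ (le_of_lt (hpos (t + 2 + s))), hpos (t + 2 + s)]
  have hG1' : (0 : ℚ) ≤ (Q ^ (t + 3 + s) - 1) / (Q ^ 2 - 1) := by
    apply div_nonneg _ (le_of_lt d2)
    linarith [hpow (t + 3 + s)]
  have hG2 : (Q ^ (t + 2 + s) - 1) / (Q - 1) ≤ Q ^ (t + 2 + s) := by
    rw [div_le_iff₀ d1]
    nlinarith [mul_le_mul_of_nonneg_left hQ2 (le_of_lt (hpos (t + 2 + s)))]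
  have hG3 : (0 : ℚ) ≤ (Q ^ (t + 1) - 1) / (Q - 1) := by
    apply div_nonneg _ (le_of_lt d1); linarith [hpow (t + 1)]
  have hRHS : Q * ((Q ^ (t + 3 + s) - 1) / (Q ^ 2 - 1) * ((Q ^ (t + 2 + s) - 1) / (Q - 1)) -
      (Q ^ (t + 1) - 1) / (Q - 1)) < Q ^ (2 * t + 5 + 2 * s) := by
    have h1 : (Q ^ (t + 3 + s) - 1) / (Q ^ 2 - 1) * ((Q ^ (t + 2 + s) - 1) / (Q - 1)) <
        Q ^ (t + 2 + s) * Q ^ (t + 2 + s) := by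
      have := mul_lt_mul' hG2 hG1 hG1' (hpos (t + 2 + s))
      nlinarith [this]
    have h2 : Q ^ (2 * t + 5 + 2 * s) = Q * (Q ^ (t + 2 + s) * Q ^ (t + 2 + s)) := by
      rw [← pow_add, ← pow_succ']; congr 1; omega
    rw [h2]
    have h3 : (Q ^ (t + 3 + s) - 1) / (Q ^ 2 - 1) * ((Q ^ (t + 2 + s) - 1) / (Q - 1)) -
        (Q ^ (t + 1) - 1) / (Q - 1) < Q ^ (t + 2 + s) * Q ^ (t + 2 + s) := by linarith
    exact mul_lt_mul_of_pos_left h3 hQ0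
  have hfinal : Q ^ (2 * t + 5 + 2 * s) ≤ Q ^ (4 * t + 6 + 2 * s) :=
    pow_le_pow_right₀ (le_of_lt hQ1) (by omega)
  linarith
end

section
/- Let q ≥ 2 be an integer and ν, m, t positive integers with m ≥ t+3, 2t > m-1, and 2ν ≥ 3m+1. Then ([t+2 choose 1]_q - [m-t+1 choose 1]_q)·(q^(2(ν-t-1)) - 1)/(q^(m-t-1) - 1) > q·[t+1 choose 1]_q. -/
theorem stmt_5 (q ν m t : ℕ) (hq : 2 ≤ q) (hν : 0 < ν) (hm : 0 < m) (ht : 0 < t)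
    (hmt : t + 3 ≤ m) (htm : m - 1 < 2 * t) (hνm : 3 * m + 1 ≤ 2 * ν) :
    (gaussBinom (q : ℚ) (t + 2) 1 - gaussBinom (q : ℚ) (m - t + 1) 1) *
        (((q : ℚ) ^ (2 * (ν - t - 1)) - 1) / ((q : ℚ) ^ (m - t - 1) - 1)) >
      (q : ℚ) * gaussBinom (q : ℚ) (t + 1) 1 := by
  have hQ : (2:ℚ) ≤ (q:ℚ) := by exact_mod_cast hq
  have hQ1 : (1:ℚ) < (q:ℚ) := by linarith
  have hden : (0:ℚ) < (q:ℚ) - 1 := by linarith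
  simp only [gaussBinom, Finset.prod_range_one, Nat.sub_zero, pow_one]
  set Q := (q:ℚ) with hQdef
  -- factor 1 ≥ Q^(t+1)
  have h1 : Q ^ (t+1) ≤ (Q ^ (t+2) - 1)/(Q-1) - (Q ^ (m - t + 1) - 1)/(Q-1) := by
    rw [div_sub_div_same, le_div_iff₀ hden]
    have hle : Q ^ (m - t + 1) ≤ Q ^ (t+1) := pow_le_pow_right₀ (by linarith) (by omega)
    have he : Q ^ (t+1) * Q = Q ^ (t+2) := by rw [← pow_succ]
    nlinarith
  -- factor 2 > Q^2
  have hB : (0:ℚ) < Q^(m-t-1) - 1 := sub_pos.2 (one_lt_pow₀ hQ1 (by omega))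
  have h2 : Q^2 < (Q^(2*(ν-t-1)) - 1)/(Q^(m-t-1)-1) := by
    rw [lt_div_iff₀ hB]
    have hAB : Q ^ (m-t-1+2) ≤ Q ^ (2*(ν-t-1)) := pow_le_pow_right₀ (by linarith) (by omega)
    have he : Q^2 * Q^(m-t-1) = Q^(m-t-1+2) := by rw [← pow_add]; ring_nf
    have hQ2 : (1:ℚ) < Q^2 := one_lt_pow₀ hQ1 (by norm_num)
    nlinarith
  -- RHS ≤ Q^(t+2)
  have h3 : Q * ((Q^(t+1) - 1)/(Q-1)) ≤ Q^(t+3) := by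
    rw [mul_div_assoc', div_le_iff₀ hden]
    have e1 : Q^(t+1) * Q = Q^(t+2) := by rw [← pow_succ]
    have e2 : Q^(t+2) * Q = Q^(t+3) := by rw [← pow_succ]
    have e3 : Q^(t+3) * Q = Q^(t+4) := by rw [← pow_succ]
    have hp : (0:ℚ) < Q^(t+2) := by positivity
    have hp3 : (0:ℚ) < Q^(t+3) := by positivity
    have k1 : 2*Q^(t+2) ≤ Q^(t+3) := by nlinarith
    have k2 : 2*Q^(t+3) ≤ Q^(t+4) := by nlinarith
    nlinarith
  -- combine
  have hpos1 : (0:ℚ) < Q^(t+1) := by positivity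
  have hpos2 : (0:ℚ) < Q^2 := by positivity
  have hkey : Q^(t+1) * Q^2 < ((Q ^ (t+2) - 1)/(Q-1) - (Q ^ (m - t + 1) - 1)/(Q-1)) *
      ((Q^(2*(ν-t-1)) - 1)/(Q^(m-t-1)-1)) := by
    apply mul_lt_mul' h1 h2 (le_of_lt hpos2) (lt_of_lt_of_le hpos1 h1)
  have he : Q^(t+1) * Q^2 = Q^(t+3) := by rw [← pow_add]
  calc Q * ((Q^(t+1) - 1)/(Q-1)) ≤ Q^(t+3) := h3
    _ = Q^(t+1) * Q^2 := he.symm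
    _ < _ := hkey
end

section
/- Let V be a 2ν-dimensional symplectic space over F_q (a vector space with a non-degenerate alternating bilinear form f). If S₁ and S₂ are totally isotropic (t+1)-subspaces with dim(S₁ ∩ S₂) < t and 2ν > 3(t+1), then there exists a totally isotropic (t+2)-subspace A with S₂ ⊆ A and A ⊄ S₁ + S₂; moreover any such A satisfies A ∩ S₁ = S₂ ∩ S₁. -/
theorem stmt_8 (𝔽 V : Type*) [Field 𝔽] [Fintype 𝔽] [AddCommGroup V] [Module 𝔽 V]
    [FiniteDimensional 𝔽 V] (ν t : ℕ)
    (hdim : Module.finrank 𝔽 V = 2 * ν)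
    (f : V →ₗ[𝔽] V →ₗ[𝔽] 𝔽)
    (halt : ∀ x : V, f x x = 0)
    (hnondeg : ∀ x : V, (∀ y : V, f x y = 0) → x = 0)
    (S₁ S₂ : Submodule 𝔽 V)
    (hiso₁ : ∀ x ∈ S₁, ∀ y ∈ S₁, f x y = 0)
    (hiso₂ : ∀ x ∈ S₂, ∀ y ∈ S₂, f x y = 0)
    (hd₁ : Module.finrank 𝔽 S₁ = t + 1)
    (hd₂ : Module.finrank 𝔽 S₂ = t + 1)
    (hint : Module.finrank 𝔽 ↥(S₁ ⊓ S₂) < t)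
    (hν : 3 * (t + 1) < 2 * ν) :
    (∃ A : Submodule 𝔽 V, (∀ x ∈ A, ∀ y ∈ A, f x y = 0) ∧
      Module.finrank 𝔽 A = t + 2 ∧ S₂ ≤ A ∧ ¬ A ≤ S₁ ⊔ S₂) ∧
    (∀ A : Submodule 𝔽 V, (∀ x ∈ A, ∀ y ∈ A, f x y = 0) →
      Module.finrank 𝔽 A = t + 2 → S₂ ≤ A → ¬ A ≤ S₁ ⊔ S₂ → A ⊓ S₁ = S₂ ⊓ S₁) := by
  have hskew : ∀ x y : V, f x y = - f y x := by
    intro x y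
    have h := halt (x + y)
    simp only [map_add, LinearMap.add_apply, halt] at h
    linear_combination h
  constructor
  · -- existence
    set g : V →ₗ[𝔽] (S₂ →ₗ[𝔽] 𝔽) := f.compl₂ S₂.subtype with hg
    have hker : ∀ x : V, x ∈ LinearMap.ker g ↔ ∀ y ∈ S₂, f x y = 0 := by
      intro x
      simp [hg, LinearMap.mem_ker, LinearMap.ext_iff, Subtype.forall]
    have h1 := LinearMap.finrank_range_add_finrank_ker g
    have h2 : Module.finrank 𝔽 (LinearMap.range g) ≤ t + 1 := by
      have h3 := Submodule.finrank_le (LinearMap.range g)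
      rw [Module.finrank_linearMap, hd₂, Module.finrank_self, mul_one] at h3
      exact h3
    have hsupdim := Submodule.finrank_sup_add_finrank_inf_eq S₁ S₂
    rw [hd₁, hd₂] at hsupdim
    have hnotle : ¬ (LinearMap.ker g ≤ S₁ ⊔ S₂) := by
      intro h
      have := Submodule.finrank_mono h
      omega
    obtain ⟨x, hxk, hxns⟩ := SetLike.not_le_iff_exists.mp hnotle
    have hxperp : ∀ y ∈ S₂, f x y = 0 := (hker x).mp hxk
    have hxns2 : x ∉ S₂ := fun h => hxns (Submodule.mem_sup_right h)
    have hx0 : x ≠ 0 := fun h => hxns2 (h ▸ S₂.zero_mem)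
    refine ⟨S₂ ⊔ (𝔽 ∙ x), ?_, ?_, le_sup_left, ?_⟩
    · intro u hu v hv
      rcases Submodule.mem_sup.mp hu with ⟨s, hs, w, hw, rfl⟩
      rcases Submodule.mem_sup.mp hv with ⟨s', hs', w', hw', rfl⟩
      rcases Submodule.mem_span_singleton.mp hw with ⟨a, rfl⟩
      rcases Submodule.mem_span_singleton.mp hw' with ⟨b, rfl⟩
      have h1 : f s s' = 0 := hiso₂ s hs s' hs'
      have h2 : f x s' = 0 := hxperp s' hs'
      have h3 : f s x = 0 := by rw [hskew, hxperp s hs, neg_zero]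
      simp [map_add, map_smul, LinearMap.add_apply, LinearMap.smul_apply, h1, h2, h3,
        halt]
    · have hinf : S₂ ⊓ (𝔽 ∙ x) = ⊥ := by
        rw [Submodule.eq_bot_iff]
        rintro z ⟨hz2, hzs⟩
        rcases Submodule.mem_span_singleton.mp hzs with ⟨c, rfl⟩
        by_cases hc : c = 0
        · simp [hc]
        · exfalso
          apply hxns2
          have := S₂.smul_mem c⁻¹ hz2
          rwa [smul_smul, inv_mul_cancel₀ hc, one_smul] at this
      have hs := Submodule.finrank_sup_add_finrank_inf_eq S₂ (𝔽 ∙ x)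
      rw [hinf, finrank_bot, hd₂, finrank_span_singleton hx0] at hs
      omega
    · intro h
      exact hxns (h (Submodule.mem_sup_right (Submodule.mem_span_singleton_self x)))
  · -- uniqueness of intersection
    intro A hisoA hdA hSA hnot
    have hsub : A ⊓ S₁ ≤ S₂ := by
      by_contra hc
      obtain ⟨z, hz, hzns⟩ := SetLike.not_le_iff_exists.mp hc
      have hBle : S₂ ⊔ (A ⊓ S₁) ≤ A := sup_le hSA inf_le_left
      have hlt : S₂ < S₂ ⊔ (A ⊓ S₁) := by
        refine lt_of_le_of_ne le_sup_left ?_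
        intro h
        apply hzns
        rw [h]
        exact Submodule.mem_sup_right hz
      have hfin : Module.finrank 𝔽 S₂ < Module.finrank 𝔽 ↥(S₂ ⊔ (A ⊓ S₁)) :=
        Submodule.finrank_lt_finrank_of_lt hlt
      have hle2 : Module.finrank 𝔽 A ≤ Module.finrank 𝔽 ↥(S₂ ⊔ (A ⊓ S₁)) := by omega
      have hEq : S₂ ⊔ (A ⊓ S₁) = A := Submodule.eq_of_le_of_finrank_le hBle hle2
      apply hnot
      rw [← hEq]
      exact sup_le le_sup_right (inf_le_right.trans le_sup_left)
    exact le_antisymm (le_inf hsub inf_le_right) (inf_le_inf_right S₁ hSA)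
end

section
/- Let V be a 2ν-dimensional symplectic space over F_q, F ⊆ P_m a t-intersecting family with τ_t(F) = t+1, and S the set of (t+1)-dimensional t-covers of F. Suppose all members of S contain a common totally isotropic t-subspace T, and set X = Σ_{S∈S} S. Then t+1 ≤ dim X ≤ m+1, and for every F ∈ F with T ⊄ F one has dim(F ∩ X) = dim X − 1. -/
theorem stmt_11 (𝔽 V : Type*) [Field 𝔽] [Fintype 𝔽] [AddCommGroup V] [Module 𝔽 V]
    [FiniteDimensional 𝔽 V] (ν m t : ℕ)
    (hdim : Module.finrank 𝔽 V = 2 * ν)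
    (f : V →ₗ[𝔽] V →ₗ[𝔽] 𝔽)
    (halt : ∀ x : V, f x x = 0)
    (hnondeg : ∀ x : V, (∀ y : V, f x y = 0) → x = 0)
    (𝓕 : Set (Submodule 𝔽 V))
    (h𝓕iso : ∀ F ∈ 𝓕, ∀ x ∈ F, ∀ y ∈ F, f x y = 0)
    (h𝓕dim : ∀ F ∈ 𝓕, Module.finrank 𝔽 F = m)
    (h𝓕int : ∀ F₁ ∈ 𝓕, ∀ F₂ ∈ 𝓕, t ≤ Module.finrank 𝔽 ↥(F₁ ⊓ F₂))
    -- 𝓢 is the set of (t+1)-dimensional t-covers of 𝓕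
    (𝓢 : Set (Submodule 𝔽 V))
    (h𝓢 : ∀ S : Submodule 𝔽 V, S ∈ 𝓢 ↔ ((∀ x ∈ S, ∀ y ∈ S, f x y = 0) ∧
      Module.finrank 𝔽 S = t + 1 ∧ ∀ F ∈ 𝓕, t ≤ Module.finrank 𝔽 ↥(S ⊓ F)))
    -- the t-covering number of 𝓕 is t+1
    (hcov : 𝓢.Nonempty)
    (hcovmin : ∀ S : Submodule 𝔽 V, (∀ x ∈ S, ∀ y ∈ S, f x y = 0) →
      (∀ F ∈ 𝓕, t ≤ Module.finrank 𝔽 ↥(S ⊓ F)) → t + 1 ≤ Module.finrank 𝔽 S)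
    -- all members of 𝓢 contain a common totally isotropic t-subspace T
    (T : Submodule 𝔽 V) (hTiso : ∀ x ∈ T, ∀ y ∈ T, f x y = 0)
    (hTdim : Module.finrank 𝔽 T = t) (hT𝓢 : ∀ S ∈ 𝓢, T ≤ S)
    (X : Submodule 𝔽 V) (hX : X = sSup 𝓢) :
    t + 1 ≤ Module.finrank 𝔽 X ∧ Module.finrank 𝔽 X ≤ m + 1 ∧
      ∀ F ∈ 𝓕, ¬ T ≤ F → Module.finrank 𝔽 ↥(F ⊓ X) = Module.finrank 𝔽 X - 1 := by

  obtain ⟨S₀, hS₀⟩ := hcov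
  obtain ⟨hS₀iso, hS₀dim, hS₀cov⟩ := (h𝓢 S₀).mp hS₀
  have hS₀le : S₀ ≤ X := hX ▸ le_sSup hS₀
  have hTX : T ≤ X := (hT𝓢 S₀ hS₀).trans hS₀le
  have hX1 : t + 1 ≤ Module.finrank 𝔽 X := by
    rw [← hS₀dim]; exact Submodule.finrank_mono hS₀le
  -- key: for F ∈ 𝓕 with ¬ T ≤ F, dim (X ⊓ F) + 1 = dim X
  have key : ∀ F ∈ 𝓕, ¬ T ≤ F →
      Module.finrank 𝔽 ↥(X ⊓ F) + 1 = Module.finrank 𝔽 X := by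
    intro F hF hTF
    have hTFlt : Module.finrank 𝔽 ↥(T ⊓ F) < t := by
      rw [← hTdim]
      exact Submodule.finrank_lt_finrank_of_lt (lt_of_le_of_ne inf_le_left
        (fun h => hTF (by rw [← h]; exact inf_le_right)))
    -- dim (T ⊓ F) = t - 1, and each S ∈ 𝓢 satisfies S = T ⊔ (S ⊓ F)
    have hTFeq : Module.finrank 𝔽 ↥(T ⊓ F) + 1 = t := by
      have hTS := hT𝓢 S₀ hS₀
      have h1 : T ⊓ (S₀ ⊓ F) = T ⊓ F := by
        rw [← inf_assoc, inf_eq_left.mpr hTS]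
      have h2 := Submodule.finrank_sup_add_finrank_inf_eq T (S₀ ⊓ F)
      rw [h1, hTdim] at h2
      have h3 : Module.finrank 𝔽 ↥(T ⊔ S₀ ⊓ F) ≤ t + 1 := by
        rw [← hS₀dim]
        exact Submodule.finrank_mono (sup_le hTS inf_le_left)
      have h4 := hS₀cov F hF
      omega
    have hSeq : ∀ S ∈ 𝓢, S = T ⊔ (S ⊓ F) := by
      intro S hS
      obtain ⟨hSiso, hSdim, hScov⟩ := (h𝓢 S).mp hS
      have hTS := hT𝓢 S hS
      have h1 : T ⊓ (S ⊓ F) = T ⊓ F := by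
        rw [← inf_assoc, inf_eq_left.mpr hTS]
      have h2 := Submodule.finrank_sup_add_finrank_inf_eq T (S ⊓ F)
      rw [h1, hTdim, hTFeq.symm] at h2
      have h4 := hScov F hF
      refine (Submodule.eq_of_le_of_finrank_le (sup_le hTS inf_le_left) ?_).symm
      omega
    have hXeq : X = T ⊔ (X ⊓ F) := by
      refine le_antisymm ?_ (sup_le hTX inf_le_left)
      rw [hX]
      refine sSup_le fun S hS => ?_
      rw [hSeq S hS]
      exact sup_le_sup_left (inf_le_inf_right F (hX ▸ le_sSup hS)) T
    have h1 : T ⊓ (X ⊓ F) = T ⊓ F := by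
      rw [← inf_assoc, inf_eq_left.mpr hTX]
    have h2 := Submodule.finrank_sup_add_finrank_inf_eq T (X ⊓ F)
    rw [h1, hTdim, ← hXeq] at h2
    omega
  -- existence of F₀ with ¬ T ≤ F₀
  obtain ⟨F₀, hF₀, hTF₀⟩ : ∃ F ∈ 𝓕, ¬ T ≤ F := by
    by_contra h
    push_neg at h
    have := hcovmin T hTiso (fun F hF => by
      rw [inf_eq_left.mpr (h F hF), hTdim])
    rw [hTdim] at this
    omega
  refine ⟨hX1, ?_, ?_⟩
  · have h1 := key F₀ hF₀ hTF₀
    have h2 : Module.finrank 𝔽 ↥(X ⊓ F₀) ≤ m := by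
      rw [← h𝓕dim F₀ hF₀]
      exact Submodule.finrank_mono inf_le_right
    omega
  · intro F hF hTF
    have h1 := key F hF hTF
    rw [inf_comm] at h1
    omega
end

section
/- Let q ≥ 2 and let ν, m, k, t be positive integers with 2ν ≥ 3m+2 and m ≥ k ≥ t+2 ≥ 3. Define N(ν,m,s) = ∏_{i=1}^{m-s} (q^(2(ν-m+i)) - 1)/(q^i - 1). Then q^(k-t)·[t choose 1]_q·(N(ν,m,k-1) − N(ν,m,k)) > (q+1)·N(ν,m,k-1). -/
/-!
Write `N(ν,m,k-1) = N(ν,m,k) · r` with `r = (q^(2(ν-k+1)) - 1)/(q^(m-k+1) - 1)` and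
`C = q^(k-t) [t]_q`. The claim becomes `(q+1) r < C (r-1)`. Since `[t]_q = 1 + q + ⋯ + q^(t-1)`,
`q^(k-1) ≤ C < q^k`, so `C ≥ q^2 ≥ q + 2`, while `2ν ≥ 3m + 2` forces `r ≥ q^k > C`;
then `C (r-1) - (q+1) r ≥ r - C > 0`.
-/

open Finset

theorem gaussBinom_one {q : ℚ} (hq : q ≠ 1) (a : ℕ) :
    gaussBinom q a 1 = ∑ i ∈ range a, q ^ i := by
  simp [gaussBinom, geom_sum_eq hq]

theorem NIso_pos {q : ℚ} (hq : 1 < q) (ν m s : ℕ) : 0 < NIso q ν m s := by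
  refine prod_pos fun i hi => div_pos ?_ ?_ <;>
    · rw [sub_pos]
      exact one_lt_pow₀ hq (by grind)

theorem NIso_eq_mul_succ (q : ℚ) {ν m s : ℕ} (hmν : m ≤ ν) (hs : s < m) :
    NIso q ν m s = NIso q ν m (s + 1) * ((q ^ (2 * (ν - s)) - 1) / (q ^ (m - s) - 1)) := by
  have hlen : m - s = m - (s + 1) + 1 := by omega
  rw [NIso, NIso, hlen, prod_Icc_succ_top (by omega), ← hlen,
    show ν - m + (m - s) = ν - s by omega]

theorem pow_le_pow_sub_one_div_pow_sub_one {K : Type*} [Field K] [LinearOrder K]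
    [IsStrictOrderedRing K] {q : K} (hq : 1 < q) {a b c : ℕ} (hb : 0 < b) (habc : b + c ≤ a) :
    q ^ c ≤ (q ^ a - 1) / (q ^ b - 1) := by
  rw [le_div_iff₀ (sub_pos.2 (one_lt_pow₀ hq hb.ne'))]
  have hba : q ^ (b + c) ≤ q ^ a := pow_le_pow_right₀ hq.le habc
  have hc : 1 ≤ q ^ c := one_le_pow₀ hq.le
  rw [pow_add] at hba
  nlinarith

theorem pow_pred_le_pow_sub_mul_geom_sum (q : ℕ) {t k : ℕ} (ht : 0 < t) (htk : t ≤ k) :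
    q ^ (k - 1) ≤ q ^ (k - t) * ∑ i ∈ range t, q ^ i := by
  rw [show k - 1 = k - t + (t - 1) by omega, pow_add]
  exact Nat.mul_le_mul_left _
    (single_le_sum (fun _ _ => Nat.zero_le _) (mem_range.2 (Nat.sub_lt ht one_pos)))

theorem pow_sub_mul_geom_sum_lt_pow {q t k : ℕ} (hq : 2 ≤ q) (htk : t ≤ k) :
    q ^ (k - t) * ∑ i ∈ range t, q ^ i < q ^ k := by
  rw [← Nat.sub_add_cancel htk, pow_add, Nat.add_sub_cancel]
  exact Nat.mul_lt_mul_of_pos_left (Nat.geomSum_lt hq fun _ => mem_range.1)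
    (pow_pos (by omega) _)

theorem mul_lt_mul_sub_one {K : Type*} [CommRing K] [LinearOrder K] [IsStrictOrderedRing K]
    {a c r : K} (ha : 0 ≤ a) (hac : a + 1 ≤ c) (hcr : c < r) : a * r < c * (r - 1) := by
  nlinarith

theorem stmt_12_general (q ν m k t : ℕ) (hq : 2 ≤ q)
    (ht : 0 < t) (hνm : 3 * m + 2 ≤ 2 * ν) (hkm : k ≤ m) (htk : t + 2 ≤ k) :
    (q : ℚ) ^ (k - t) * gaussBinom (q : ℚ) t 1 * (NIso (q : ℚ) ν m (k - 1) - NIso (q : ℚ) ν m k) >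
      ((q : ℚ) + 1) * NIso (q : ℚ) ν m (k - 1) := by
  have hq1 : (1 : ℚ) < q := by exact_mod_cast hq
  obtain ⟨s, rfl⟩ : ∃ s, k = s + 1 := ⟨k - 1, by omega⟩
  rw [Nat.add_sub_cancel, NIso_eq_mul_succ (q : ℚ) (by omega) (by omega),
    gaussBinom_one hq1.ne']
  set C := q ^ (s + 1 - t) * ∑ i ∈ range t, q ^ i
  have hC_lower : q + 2 ≤ C := calc
    q + 2 ≤ q ^ 2 := by nlinarith
    _ ≤ q ^ s := Nat.pow_le_pow_right (by omega) (by omega)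
    _ ≤ C := pow_pred_le_pow_sub_mul_geom_sum q (k := s + 1) ht (by omega)
  have hC_upper : C < q ^ (s + 1) := pow_sub_mul_geom_sum_lt_pow hq (by omega)
  set r := ((q : ℚ) ^ (2 * (ν - s)) - 1) / ((q : ℚ) ^ (m - s) - 1)
  have hr : (q : ℚ) ^ (s + 1) ≤ r :=
    pow_le_pow_sub_one_div_pow_sub_one hq1 (by omega) (by omega : m - s + (s + 1) ≤ 2 * (ν - s))
  have key : ((q : ℚ) + 1) * r < C * (r - 1) :=
    mul_lt_mul_sub_one (by positivity) (by exact_mod_cast hC_lower)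
      (lt_of_lt_of_le (by exact_mod_cast hC_upper) hr)
  have hN := NIso_pos hq1 ν m (s + 1)
  calc ((q : ℚ) + 1) * (NIso q ν m (s + 1) * r)
      = NIso q ν m (s + 1) * (((q : ℚ) + 1) * r) := by ring
    _ < NIso q ν m (s + 1) * (C * (r - 1)) := mul_lt_mul_of_pos_left key hN
    _ = _ := by push_cast [C]; ring

theorem stmt_12 (q ν m k t : ℕ) (hq : 2 ≤ q) (hν : 0 < ν) (hm : 0 < m) (hk : 0 < k)
    (ht : 0 < t) (hνm : 3 * m + 2 ≤ 2 * ν) (hkm : k ≤ m) (htk : t + 2 ≤ k) (ht2 : 3 ≤ t + 2) :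
    (q : ℚ) ^ (k - t) * gaussBinom (q : ℚ) t 1 * (NIso (q : ℚ) ν m (k - 1) - NIso (q : ℚ) ν m k) >
      ((q : ℚ) + 1) * NIso (q : ℚ) ν m (k - 1) :=
  stmt_12_general q ν m k t hq ht hνm hkm htk
end

section
/- Let q ≥ 2 and let ν, m, t be positive integers with m ≥ t+2 and 2ν ≥ max{3m+2, 2m+2t+6}. Then [m−t+1 choose 1]_q · (q^(2(ν−t−1)) − 1)/(q^(m−t−1) − 1) − q·[m−t+1 choose 2]_q − [t+2 choose 2]_q·[m−t+1 choose 1]_q² > q^(2ν−2t−1) − q^(2(m−t)+1) − q^(2(m+2)) ≥ 0. -/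
set_option maxHeartbeats 1000000 in
lemma key (Q : ℚ) (hQ : 2 ≤ Q) (t u k : ℕ) (ht : 1 ≤ t) :
    ((Q^(u+3)-1)/(Q-1) * ((Q^(2*(t+u+4+k))-1)/(Q^(u+1)-1))
     - Q * ((Q^(u+3)-1)/(Q^2-1) * ((Q^(u+2)-1)/(Q-1)))
     - ((Q^(t+2)-1)/(Q^2-1) * ((Q^(t+1)-1)/(Q-1))) * ((Q^(u+3)-1)/(Q-1))^2
     > Q^(2*(t+u+4+k)+1) - Q^(2*u+5) - Q^(2*(t+u)+8))
    ∧ Q^(2*(t+u+4+k)+1) - Q^(2*u+5) - Q^(2*(t+u)+8) ≥ 0 := by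
  have hQ0 : (0:ℚ) < Q := by linarith
  have hQ1 : (1:ℚ) < Q := by linarith
  have ha1 : (1:ℚ) ≤ Q^u := one_le_pow₀ (by linarith)
  have hb1 : Q ≤ Q^t := le_self_pow₀ (by linarith) (by omega)
  have hc1 : (1:ℚ) ≤ Q^k := one_le_pow₀ (by linarith)
  set a := Q^u with ha
  set b := Q^t with hb
  set c := Q^k with hc
  have hXdef : Q^(t+u+4+k) = a*b*c*Q^4 := by rw [ha, hb, hc]; ring
  set X := Q^(t+u+4+k) with hX
  have e1 : Q^(u+3) = a*Q^3 := by rw [ha]; ring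
  have e2 : Q^(u+2) = a*Q^2 := by rw [ha]; ring
  have e3 : Q^(u+1) = a*Q := by rw [ha]; ring
  have e4 : Q^(t+2) = b*Q^2 := by rw [hb]; ring
  have e5 : Q^(t+1) = b*Q := by rw [hb]; ring
  have e6 : Q^(2*(t+u+4+k)) = X^2 := by rw [hX]; ring
  have e7 : Q^(2*(t+u+4+k)+1) = Q*X^2 := by rw [hX]; ring
  have e8 : Q^(2*u+5) = a^2*Q^5 := by rw [ha]; ring
  have e9 : Q^(2*(t+u)+8) = a^2*b^2*Q^8 := by rw [ha, hb]; ring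
  rw [e1, e2, e3, e4, e5, e6, e7, e8, e9]
  clear_value a b c X
  clear ha hb hc hX e1 e2 e3 e4 e5 e6 e7 e8 e9
  have hQ4 : (16:ℚ) ≤ Q^4 := by
    calc (16:ℚ) = 2^4 := by norm_num
      _ ≤ Q^4 := pow_le_pow_left₀ (by norm_num) hQ 4
  have hQQ3 : Q ≤ Q^3 := le_self_pow₀ (by linarith) (by norm_num)
  have hQQ4 : Q ≤ Q^4 := le_self_pow₀ (by linarith) (by norm_num)
  have hXge : Q^5 ≤ X := by
    rw [hXdef]
    have h1 : Q ≤ b*c := by nlinarith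
    have h2 : Q ≤ a*b*c := by nlinarith
    calc Q^5 = Q*Q^4 := by ring
      _ ≤ (a*b*c)*Q^4 := mul_le_mul_of_nonneg_right h2 (by positivity)
      _ = a*b*c*Q^4 := by ring
  have hQ5X : (32:ℚ) ≤ X := by nlinarith
  have hd1 : (0:ℚ) < Q - 1 := by linarith
  have hd2 : (0:ℚ) < Q^2 - 1 := by nlinarith
  have hd3 : (0:ℚ) < a*Q - 1 := by nlinarith
  have hA : Q*X^2 - Q < (a*Q^3-1)/(Q-1) * ((X^2-1)/(a*Q-1)) := by
    rw [div_mul_div_comm, lt_div_iff₀ (by positivity)]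
    nlinarith [mul_pos (show (0:ℚ) < X^2-1 by nlinarith)
      (show (0:ℚ) < a*Q^2 + Q^2 - Q - 1 by nlinarith [mul_nonneg (sub_nonneg.2 ha1) (sq_nonneg Q)])]
  have hB : Q * ((a*Q^3-1)/(Q^2-1) * ((a*Q^2-1)/(Q-1))) ≤ a^2*Q^5 - Q := by
    rw [div_mul_div_comm, mul_div_assoc', div_le_iff₀ (by positivity)]
    have hN : Q*((a*Q^3-1)*(a*Q^2-1)) ≤ a^2*Q^6 := by
      nlinarith [mul_nonneg (sub_nonneg.2 ha1) (pow_nonneg hQ0.le 4),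
        mul_nonneg (sub_nonneg.2 ha1) (pow_nonneg hQ0.le 3), hQQ4, pow_pos hQ0 3]
    have hD : (3/8:ℚ)*Q^3 ≤ (Q^2-1)*(Q-1) := by
      nlinarith [mul_nonneg (show (0:ℚ) ≤ Q-2 by linarith) (sq_nonneg Q), sq_nonneg (Q-2)]
    have ha2 : (0:ℚ) ≤ a^2 - 1 := by nlinarith
    have hmid : a^2*Q^6 ≤ (a^2*Q^5 - Q)*((3/8:ℚ)*Q^3) := by
      have h34 : (0:ℚ) ≤ 3*Q^4 - 8*Q^2 - 3 := by
        nlinarith [mul_nonneg (show (0:ℚ) ≤ Q^2-4 by nlinarith) (sq_nonneg Q)]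
      nlinarith [mul_nonneg ha2 (show (0:ℚ) ≤ (3*Q^2-8)*Q^6 by nlinarith [pow_pos hQ0 6]),
        mul_nonneg (pow_nonneg hQ0.le 4) h34]
    calc Q*((a*Q^3-1)*(a*Q^2-1)) ≤ a^2*Q^6 := hN
      _ ≤ (a^2*Q^5 - Q)*((3/8:ℚ)*Q^3) := hmid
      _ ≤ (a^2*Q^5 - Q)*((Q^2-1)*(Q-1)) := by
          apply mul_le_mul_of_nonneg_left hD
          nlinarith [mul_nonneg ha2 (pow_nonneg hQ0.le 5), pow_pos hQ0 5]
  have hC : ((b*Q^2-1)/(Q^2-1) * ((b*Q-1)/(Q-1))) * ((a*Q^3-1)/(Q-1))^2 ≤ a^2*b^2*Q^8 := by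
    rw [div_mul_div_comm, div_pow, div_mul_div_comm, div_le_iff₀ (by positivity)]
    have hb0 : (1:ℚ) ≤ b := by linarith
    have h1 : (0:ℚ) ≤ b*Q^2-1 := by nlinarith
    have h2 : (0:ℚ) ≤ b*Q-1 := by nlinarith
    have h3 : (a*Q^3-1)^2 ≤ (a*Q^3)^2 := by nlinarith [pow_pos hQ0 3]
    have h4 : (b*Q^2-1)*(b*Q-1) ≤ (b*Q^2)*(b*Q) := by nlinarith [pow_pos hQ0 2, pow_pos hQ0 3]
    have hD : (3/32:ℚ)*Q^5 ≤ (Q^2-1)*((Q-1)^2*(Q-1)) := by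
      have hq2 : Q/2 ≤ Q-1 := by linarith
      have hcube : (Q/2)^3 ≤ (Q-1)^3 := pow_le_pow_left₀ (by linarith) hq2 3
      have hsq : (3/4:ℚ)*Q^2 ≤ Q^2-1 := by nlinarith
      calc (3/32:ℚ)*Q^5 = (3/4)*Q^2 * ((Q/2)^3) := by ring
        _ ≤ (Q^2-1) * ((Q/2)^3) := by apply mul_le_mul_of_nonneg_right hsq (by positivity)
        _ ≤ (Q^2-1) * ((Q-1)^3) := by apply mul_le_mul_of_nonneg_left hcube (by linarith)
        _ = (Q^2-1)*((Q-1)^2*(Q-1)) := by ring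
    calc (b*Q^2-1)*(b*Q-1)*((a*Q^3-1)^2)
        ≤ (b*Q^2-1)*(b*Q-1)*((a*Q^3)^2) := mul_le_mul_of_nonneg_left h3 (mul_nonneg h1 h2)
      _ ≤ (b*Q^2)*(b*Q)*((a*Q^3)^2) := mul_le_mul_of_nonneg_right h4 (by positivity)
      _ = a^2*b^2*Q^9 := by ring
      _ ≤ a^2*b^2*Q^8 * ((3/32:ℚ)*Q^5) := by
          nlinarith [mul_pos (mul_pos (show (0:ℚ)<a^2*b^2 by positivity) (pow_pos hQ0 8)) (pow_pos hQ0 5),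
            mul_pos (show (0:ℚ)<a^2*b^2 by positivity) (pow_pos hQ0 9)]
      _ ≤ a^2*b^2*Q^8 * ((Q^2-1)*((Q-1)^2*(Q-1))) := mul_le_mul_of_nonneg_left hD (by positivity)
      _ = a^2*b^2*Q^8 * ((Q^2-1)*(Q-1)*(Q-1)^2) := by ring
  refine ⟨?_, ?_⟩
  · linarith [hA, hB, hC]
  · have hQ510 : Q^5 ≤ Q^10 := pow_le_pow_right₀ (by linarith) (by norm_num)
    have hb2 : Q^2 ≤ b^2 := by nlinarith
    have hc2 : (1:ℚ) ≤ c^2 := by nlinarith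
    have ky2 : a^2*Q^5 ≤ a^2*b^2*Q^8 := by
      nlinarith [mul_nonneg (mul_nonneg (sq_nonneg a) (show (0:ℚ) ≤ b^2 - Q^2 by linarith)) (pow_nonneg hQ0.le 8),
        mul_nonneg (sq_nonneg a) (show (0:ℚ) ≤ Q^10 - Q^5 by linarith)]
    have ky3 : 2*(a^2*b^2*Q^8) ≤ a^2*b^2*Q^9 := by
      nlinarith [mul_nonneg (show (0:ℚ) ≤ Q-2 by linarith) (show (0:ℚ) ≤ a^2*b^2*Q^8 by positivity)]
    have ky4 : a^2*b^2*Q^9 ≤ Q*X^2 := by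
      rw [hXdef]
      nlinarith [mul_nonneg (show (0:ℚ) ≤ c^2-1 by linarith) (show (0:ℚ) ≤ a^2*b^2*Q^9 by positivity)]
    linarith

theorem stmt_16 (q ν m t : ℕ) (hq : 2 ≤ q) (hν : 0 < ν) (hm : 0 < m) (ht : 0 < t)
    (hmt : t + 2 ≤ m) (hν1 : 3 * m + 2 ≤ 2 * ν) (hν2 : 2 * m + 2 * t + 6 ≤ 2 * ν) :
    (gaussBinom (q : ℚ) (m - t + 1) 1 *
          (((q : ℚ) ^ (2 * (ν - t - 1)) - 1) / ((q : ℚ) ^ (m - t - 1) - 1)) -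
        (q : ℚ) * gaussBinom (q : ℚ) (m - t + 1) 2 -
        gaussBinom (q : ℚ) (t + 2) 2 * gaussBinom (q : ℚ) (m - t + 1) 1 ^ 2 >
      (q : ℚ) ^ (2 * ν - 2 * t - 1) - (q : ℚ) ^ (2 * (m - t) + 1) - (q : ℚ) ^ (2 * (m + 2))) ∧
    (q : ℚ) ^ (2 * ν - 2 * t - 1) - (q : ℚ) ^ (2 * (m - t) + 1) - (q : ℚ) ^ (2 * (m + 2)) ≥ 0 := by
  obtain ⟨u, hu⟩ : ∃ u, m = t + 2 + u := ⟨m - (t+2), by omega⟩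
  obtain ⟨k, hk⟩ : ∃ k, ν = t + 1 + (t + u + 4 + k) := ⟨ν - (2*t + u + 5), by omega⟩
  subst hu hk
  have hQ : (2:ℚ) ≤ (q:ℚ) := by exact_mod_cast hq
  simp only [show t+2+u - t + 1 = u+3 from by omega,
    show t+1+(t+u+4+k) - t - 1 = t+u+4+k from by omega,
    show t+2+u - t - 1 = u+1 from by omega,
    show 2*(t+1+(t+u+4+k)) - 2*t - 1 = 2*(t+u+4+k)+1 from by omega,
    show 2*(t+2+u - t) + 1 = 2*u+5 from by omega,
    show 2*(t+2+u+2) = 2*(t+u)+8 from by omega]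
  have hg1 : gaussBinom (q:ℚ) (u+3) 1 = ((q:ℚ)^(u+3)-1)/((q:ℚ)-1) := by
    simp [gaussBinom]
  have hg2 : gaussBinom (q:ℚ) (u+3) 2
      = ((q:ℚ)^(u+3)-1)/((q:ℚ)^2-1) * (((q:ℚ)^(u+2)-1)/((q:ℚ)-1)) := by
    simp [gaussBinom, Finset.prod_range_succ, show u+3-1 = u+2 from by omega, div_mul_div_comm]
  have hg3 : gaussBinom (q:ℚ) (t+2) 2
      = ((q:ℚ)^(t+2)-1)/((q:ℚ)^2-1) * (((q:ℚ)^(t+1)-1)/((q:ℚ)-1)) := by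
    simp [gaussBinom, Finset.prod_range_succ, show t+2-1 = t+1 from by omega, div_mul_div_comm]
  rw [hg1, hg2, hg3]
  exact key (q:ℚ) hQ t u k ht
end

section
/- Let q ≥ 2 and let ν, m, t be positive integers with m ≥ t+2 and 2ν ≥ 3m+2. Then [t+2 choose 1]_q − q·[t+1 choose 1]_q·(q^(m−t−1) − 1)/(q^(2(ν−t−1)) − 1) > q^(t+1) − q^(−3) > q + 1. -/
theorem stmt_17 (q ν m t : ℕ) (hq : 2 ≤ q) (hν : 0 < ν) (hm : 0 < m) (ht : 0 < t)
    (hmt : t + 2 ≤ m) (hνm : 3 * m + 2 ≤ 2 * ν) :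
    (gaussBinom (q : ℚ) (t + 2) 1 -
          (q : ℚ) * gaussBinom (q : ℚ) (t + 1) 1 *
            (((q : ℚ) ^ (m - t - 1) - 1) / ((q : ℚ) ^ (2 * (ν - t - 1)) - 1)) >
        (q : ℚ) ^ (t + 1) - (q : ℚ) ^ (-3 : ℤ)) ∧
    (q : ℚ) ^ (t + 1) - (q : ℚ) ^ (-3 : ℤ) > (q : ℚ) + 1 := by
  set Q : ℚ := (q : ℚ) with hQdef
  have hQ2 : (2 : ℚ) ≤ Q := by rw [hQdef]; exact_mod_cast hq
  have hQ1 : (1 : ℚ) < Q := by linarith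
  have hQ0 : (0 : ℚ) < Q := by linarith
  set a : ℕ := m - t - 1 with ha
  set c : ℕ := ν - t - 1 with hc
  have ha1 : 1 ≤ a := by omega
  have hac : a + 1 ≤ 2 * c := by omega
  have hd1 : (0 : ℚ) < Q - 1 := by linarith
  have hpow : ∀ n : ℕ, 1 ≤ n → (1 : ℚ) < Q ^ n := fun n hn =>
    one_lt_pow₀ hQ1 (by omega)
  have hd2 : (0 : ℚ) < Q ^ (2 * c) - 1 := by
    have := hpow (2 * c) (by omega); linarith
  have hneg3 : (0 : ℚ) < Q ^ (-3 : ℤ) := zpow_pos hQ0 _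
  have hneg3' : Q ^ (-3 : ℤ) < 1 := by
    have : (1 : ℚ) < Q ^ (3 : ℕ) := hpow 3 (by omega)
    rw [zpow_neg, show ((3:ℤ)) = ((3:ℕ):ℤ) by norm_num, zpow_natCast]
    rw [inv_lt_one_iff₀]; right; exact this
  constructor
  · -- main inequality
    have hg1 : gaussBinom Q (t + 2) 1 = (Q ^ (t + 2) - 1) / (Q - 1) := by
      simp [gaussBinom]
    have hg2 : gaussBinom Q (t + 1) 1 = (Q ^ (t + 1) - 1) / (Q - 1) := by
      simp [gaussBinom]
    rw [hg1, hg2]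
    set R : ℚ := (Q ^ a - 1) / (Q ^ (2 * c) - 1) with hR
    have hA : (0 : ℚ) < (Q ^ (t + 1) - 1) / (Q - 1) := by
      apply div_pos _ hd1
      have := hpow (t + 1) (by omega); linarith
    have hQR : Q * R < 1 := by
      rw [hR, ← mul_div_assoc]
      rw [div_lt_one hd2]
      have h1 : Q * (Q ^ a - 1) = Q ^ (a + 1) - Q := by ring
      have h2 : Q ^ (a + 1) ≤ Q ^ (2 * c) := pow_le_pow_right₀ (le_of_lt hQ1) hac
      linarith
    have hsplit : (Q ^ (t + 2) - 1) / (Q - 1)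
        = Q ^ (t + 1) + (Q ^ (t + 1) - 1) / (Q - 1) := by
      field_simp
      ring
    rw [hsplit]
    have key : Q * ((Q ^ (t + 1) - 1) / (Q - 1)) * R
        ≤ (Q ^ (t + 1) - 1) / (Q - 1) := by
      have : Q * ((Q ^ (t + 1) - 1) / (Q - 1)) * R
          = (Q * R) * ((Q ^ (t + 1) - 1) / (Q - 1)) := by ring
      rw [this]
      nlinarith [hA, hQR]
    linarith
  · -- second inequality
    have h1 : Q ^ 2 ≤ Q ^ (t + 1) := pow_le_pow_right₀ (le_of_lt hQ1) (by omega)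
    have h2 : Q + 2 ≤ Q ^ 2 := by nlinarith
    linarith
end

section
/- Let V be a 2ν-dimensional symplectic space over F_q and let F be a maximal t-intersecting family of totally isotropic m-subspaces with τ_t(F) = t+1. Let S be the set of (t+1)-dimensional t-covers of F, and suppose S is non-trivial as a t-intersecting family of (t+1)-subspaces (τ_t(S) = t+1), with all members of S contained in a common (t+2)-subspace Z. Then every F ∈ F satisfies dim(F ∩ Z) ≥ t+1. -/
theorem stmt_19 (𝔽 V : Type*) [Field 𝔽] [Fintype 𝔽] [AddCommGroup V] [Module 𝔽 V]
    [FiniteDimensional 𝔽 V] (ν m t : ℕ)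
    (hdim : Module.finrank 𝔽 V = 2 * ν)
    (f : V →ₗ[𝔽] V →ₗ[𝔽] 𝔽)
    (halt : ∀ x : V, f x x = 0)
    (hnondeg : ∀ x : V, (∀ y : V, f x y = 0) → x = 0)
    (𝓕 : Set (Submodule 𝔽 V))
    (h𝓕iso : ∀ F ∈ 𝓕, ∀ x ∈ F, ∀ y ∈ F, f x y = 0)
    (h𝓕dim : ∀ F ∈ 𝓕, Module.finrank 𝔽 F = m)
    (h𝓕int : ∀ F₁ ∈ 𝓕, ∀ F₂ ∈ 𝓕, t ≤ Module.finrank 𝔽 ↥(F₁ ⊓ F₂))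
    -- maximality of 𝓕
    (hmax : ∀ G : Submodule 𝔽 V, (∀ x ∈ G, ∀ y ∈ G, f x y = 0) →
      Module.finrank 𝔽 G = m → (∀ F ∈ 𝓕, t ≤ Module.finrank 𝔽 ↥(G ⊓ F)) → G ∈ 𝓕)
    -- 𝓢 is the set of (t+1)-dimensional t-covers of 𝓕
    (𝓢 : Set (Submodule 𝔽 V))
    (h𝓢 : ∀ S : Submodule 𝔽 V, S ∈ 𝓢 ↔ ((∀ x ∈ S, ∀ y ∈ S, f x y = 0) ∧
      Module.finrank 𝔽 S = t + 1 ∧ ∀ F ∈ 𝓕, t ≤ Module.finrank 𝔽 ↥(S ⊓ F)))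
    -- the t-covering number of 𝓕 is t+1
    (hcov : 𝓢.Nonempty)
    (hcovmin : ∀ S : Submodule 𝔽 V, (∀ x ∈ S, ∀ y ∈ S, f x y = 0) →
      (∀ F ∈ 𝓕, t ≤ Module.finrank 𝔽 ↥(S ⊓ F)) → t + 1 ≤ Module.finrank 𝔽 S)
    -- 𝓢 is non-trivial as a t-intersecting family: τ_t(𝓢) = t+1
    (hnontriv : ¬ ∃ T : Submodule 𝔽 V, Module.finrank 𝔽 T = t ∧ ∀ S ∈ 𝓢, T ≤ S)
    -- all members of 𝓢 lie in a common (t+2)-subspace Z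
    (Z : Submodule 𝔽 V) (hZdim : Module.finrank 𝔽 Z = t + 2) (hZ : ∀ S ∈ 𝓢, S ≤ Z) :
    ∀ F ∈ 𝓕, t + 1 ≤ Module.finrank 𝔽 ↥(F ⊓ Z) := by
  intro F hF
  by_contra hlt
  push_neg at hlt
  obtain ⟨S₀, hS₀⟩ := hcov
  have key : ∀ S ∈ 𝓢, F ⊓ Z ≤ S := by
    intro S hS
    have hSZ := hZ S hS
    obtain ⟨_, hSdim, hScov⟩ := (h𝓢 S).1 hS
    have hle : S ⊓ F ≤ F ⊓ Z := by
      refine le_inf inf_le_right (le_trans inf_le_left hSZ)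
    have h1 : t ≤ Module.finrank 𝔽 ↥(S ⊓ F) := hScov F hF
    have h2 : Module.finrank 𝔽 ↥(F ⊓ Z) ≤ t := Nat.lt_succ_iff.mp hlt
    have heq : S ⊓ F = F ⊓ Z := Submodule.eq_of_le_of_finrank_le hle
      (le_trans h2 h1)
    rw [← heq]
    exact inf_le_left
  have hdimFZ : Module.finrank 𝔽 ↥(F ⊓ Z) = t := by
    have h1 : t ≤ Module.finrank 𝔽 ↥(F ⊓ Z) := by
      obtain ⟨_, _, hScov⟩ := (h𝓢 S₀).1 hS₀
      calc t ≤ Module.finrank 𝔽 ↥(S₀ ⊓ F) := hScov F hF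
        _ ≤ Module.finrank 𝔽 ↥(F ⊓ Z) := Submodule.finrank_mono
            (le_inf inf_le_right (le_trans inf_le_left (hZ S₀ hS₀)))
    omega
  exact hnontriv ⟨F ⊓ Z, hdimFZ, key⟩
end
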